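/- arXiv:2405.11303 — 2 statements merged into one kernel-verified Lean document; each statement's English description precedes it below -/
import Mathlib

section
/- Let A ∈ (1,2] and let f be analytic on the open unit disc 𝔻 with f(0)=0, f'(0)=1 and Re f'(z) > 0 for all z ∈ 𝔻. Then Re T_f(z) > 0 for all z with |z| < 1 − 2/√(A+3), where T_f(z) = (2/(A−1))·[((A+1)/2)·(1+z)/(1−z) − 1 − z f''(z)/f'(z)]. -/
open Complex Metric Set

/-- The concavity test function `T_f` associated with `Co(A)`. -/
noncomputable def Tfun (A : ℝ) (f : ℂ → ℂ) (z : ℂ) : ℂ :=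
  (2 / ((A : ℂ) - 1)) * ((((A : ℂ) + 1) / 2) * (1 + z) / (1 - z) - 1 -
    z * deriv (deriv f) z / deriv f z)

/-!
Since `Re f' > 0`, the Carathéodory-type estimate `|p'(z)| (1 - |z|²) ≤ 2 Re p(z)` for
`p = f'` bounds `|z f''/f'|` by `2r/(1 - r²)` on `|z| = r`, while
`Re ((1 + z)/(1 - z)) ≥ (1 - r)/(1 + r)`. Hence
`(A - 1)/2 · Re T_f(z) ≥ ((A + 3)(1 - r)² - 4) / (2(1 - r²))`, which is positive exactly when
`r < 1 - 2/√(A + 3)`.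
The estimate itself is the Schwarz lemma for the Cayley transform `(p - p(z))/(p + conj p(z))`,
precomposed with the disc automorphism moving `0` to `z`.
-/

namespace Complex

open ComplexConjugate

lemma normSq_add_conj_sub_normSq_sub (a w : ℂ) :
    normSq (w + conj a) - normSq (w - a) = 4 * w.re * a.re := by
  simp only [normSq_apply, add_re, add_im, sub_re, sub_im, conj_re, conj_im]
  ring

lemma normSq_one_add_conj_mul_sub_normSq_add (a w : ℂ) :
    normSq (1 + conj a * w) - normSq (w + a) = (1 - normSq a) * (1 - normSq w) := by
  simp only [normSq_apply, add_re, add_im, mul_re, mul_im, conj_re, conj_im, one_re, one_im]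
  ring

/-- The Möbius automorphism of the unit disc sending `0` to `a`. -/
noncomputable def discAut (a w : ℂ) : ℂ := (w + a) / (1 + conj a * w)

section discAut

variable {a w : ℂ}

lemma discAut_zero (a : ℂ) : discAut a 0 = a := by simp [discAut]

lemma one_add_conj_mul_ne_zero (ha : ‖a‖ < 1) (hw : ‖w‖ < 1) : 1 + conj a * w ≠ 0 := by
  intro h
  have : ‖conj a * w‖ < 1 := by
    rw [norm_mul, norm_conj]
    nlinarith [norm_nonneg a, norm_nonneg w]
  rw [eq_neg_of_add_eq_zero_right h, norm_neg, norm_one] at this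
  exact this.false

lemma hasDerivAt_discAut (ha : ‖a‖ < 1) (hw : ‖w‖ < 1) :
    HasDerivAt (discAut a) ((1 - a * conj a) / (1 + conj a * w) ^ 2) w := by
  have hnum : HasDerivAt (fun w : ℂ => w + a) 1 w := (hasDerivAt_id w).add_const a
  have hden : HasDerivAt (fun w : ℂ => 1 + conj a * w) (conj a) w := by
    simpa using ((hasDerivAt_id w).const_mul (conj a)).const_add 1
  exact (hnum.div hden (one_add_conj_mul_ne_zero ha hw)).congr_deriv (by ring)

lemma differentiableOn_discAut (ha : ‖a‖ < 1) : DifferentiableOn ℂ (discAut a) (ball 0 1) :=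
  fun _ hw ↦
    (hasDerivAt_discAut ha (mem_ball_zero_iff.mp hw)).differentiableAt.differentiableWithinAt

lemma mapsTo_discAut (ha : ‖a‖ < 1) : MapsTo (discAut a) (ball 0 1) (ball 0 1) := by
  intro w hw
  rw [mem_ball_zero_iff] at hw ⊢
  have hden := one_add_conj_mul_ne_zero ha hw
  rw [discAut, norm_div, div_lt_one (norm_pos_iff.mpr hden), ← sq_lt_sq₀ (norm_nonneg _)
    (norm_nonneg _), ← normSq_eq_norm_sq, ← normSq_eq_norm_sq, ← sub_pos,
    normSq_one_add_conj_mul_sub_normSq_add, normSq_eq_norm_sq, normSq_eq_norm_sq]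
  exact mul_pos (by nlinarith [norm_nonneg a]) (by nlinarith [norm_nonneg w])

end discAut

theorem norm_deriv_mul_le_two_re_of_re_pos {p : ℂ → ℂ} {c : ℂ} {R : ℝ} (hR : 0 < R)
    (hp : DifferentiableOn ℂ p (ball c R)) (hre : ∀ w ∈ ball c R, 0 < (p w).re) :
    ‖deriv p c‖ * R ≤ 2 * (p c).re := by
  have hc : c ∈ ball c R := mem_ball_self hR
  have hden : ∀ w ∈ ball c R, p w + conj (p c) ≠ 0 := fun w hw h ↦ by
    have := congrArg re h
    simp only [add_re, conj_re, zero_re] at this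
    linarith [hre w hw, hre c hc]
  set g : ℂ → ℂ := fun w ↦ (p w - p c) / (p w + conj (p c))
  have hg : DifferentiableOn ℂ g (ball c R) :=
    (hp.sub_const _).div (hp.add_const _) hden
  have hgc : g c = 0 := by simp [g]
  have hmaps : MapsTo g (ball c R) (closedBall (g c) 1) := by
    intro w hw
    rw [hgc, mem_closedBall_zero_iff, norm_div, div_le_one (norm_pos_iff.mpr (hden w hw)),
      ← sq_le_sq₀ (norm_nonneg _) (norm_nonneg _), ← normSq_eq_norm_sq, ← normSq_eq_norm_sq,
      ← sub_nonneg, normSq_add_conj_sub_normSq_sub]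
    exact (mul_pos (mul_pos four_pos (hre w hw)) (hre c hc)).le
  have hpc : HasDerivAt p (deriv p c) c :=
    (hp.differentiableAt (isOpen_ball.mem_nhds hc)).hasDerivAt
  have hre_ne : ((p c).re : ℂ) ≠ 0 := ofReal_ne_zero.mpr (hre c hc).ne'
  have hgc' : HasDerivAt g (deriv p c / (2 * (p c).re)) c := by
    refine ((hpc.sub_const _).div (hpc.add_const _) (hden c hc)).congr_deriv ?_
    rw [add_conj, sub_self, zero_mul, sub_zero]
    field_simp
    push_cast
    ring
  have hschwarz := norm_deriv_le_div_of_mapsTo_ball hg hmaps hR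
  rw [hgc'.deriv, norm_div, norm_mul, norm_ofNat, norm_real, Real.norm_of_nonneg (hre c hc).le,
    div_le_div_iff₀ (by linarith [hre c hc]) hR] at hschwarz
  linarith

theorem norm_deriv_mul_one_sub_sq_le_two_re {p : ℂ → ℂ}
    (hp : DifferentiableOn ℂ p (ball 0 1))
    (hre : ∀ w ∈ ball (0 : ℂ) 1, 0 < (p w).re) {z : ℂ} (hz : ‖z‖ < 1) :
    ‖deriv p z‖ * (1 - ‖z‖ ^ 2) ≤ 2 * (p z).re := by
  have hmaps := mapsTo_discAut hz
  have hP : DifferentiableOn ℂ (p ∘ discAut z) (ball 0 1) :=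
    hp.comp (differentiableOn_discAut hz) hmaps
  have hPre : ∀ w ∈ ball (0 : ℂ) 1, 0 < ((p ∘ discAut z) w).re :=
    fun _ hw ↦ hre _ (hmaps hw)
  have hpz : HasDerivAt p (deriv p z) (discAut z 0) := by
    rw [discAut_zero]
    exact (hp.differentiableAt (isOpen_ball.mem_nhds (mem_ball_zero_iff.mpr hz))).hasDerivAt
  have hP0 := hpz.comp 0 (hasDerivAt_discAut hz (by simp))
  have hcar := norm_deriv_mul_le_two_re_of_re_pos one_pos hP hPre
  have hnorm : ‖(1 - z * conj z) / (1 + conj z * 0) ^ 2‖ = 1 - ‖z‖ ^ 2 := by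
    rw [mul_conj, normSq_eq_norm_sq, mul_zero, add_zero, one_pow, div_one, ← ofReal_one,
      ← ofReal_sub, norm_real, Real.norm_of_nonneg (by nlinarith [norm_nonneg z])]
  rwa [hP0.deriv, norm_mul, hnorm, mul_one, Function.comp_apply, discAut_zero] at hcar

theorem norm_mul_deriv_div_le {p : ℂ → ℂ} (hp : DifferentiableOn ℂ p (ball 0 1))
    (hre : ∀ w ∈ ball (0 : ℂ) 1, 0 < (p w).re) {z : ℂ} (hz : ‖z‖ < 1) :
    ‖z * deriv p z / p z‖ ≤ 2 * ‖z‖ / (1 - ‖z‖ ^ 2) := by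
  have hpz : 0 < ‖p z‖ := (hre z (mem_ball_zero_iff.mpr hz)).trans_le (re_le_norm _)
  have hcar := norm_deriv_mul_one_sub_sq_le_two_re hp hre hz
  rw [norm_div, norm_mul, div_le_div_iff₀ hpz (by nlinarith [norm_nonneg z])]
  nlinarith [re_le_norm (p z), norm_nonneg z]

theorem one_sub_norm_div_one_add_norm_le_re {z : ℂ} (hz : ‖z‖ < 1) :
    (1 - ‖z‖) / (1 + ‖z‖) ≤ ((1 + z) / (1 - z)).re := by
  have hz1 : 1 - z ≠ 0 := fun h ↦ by simp [← eq_of_sub_eq_zero h] at hz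
  have hre : ((1 + z) / (1 - z)).re = (1 - ‖z‖ ^ 2) / ‖1 - z‖ ^ 2 := by
    rw [div_re, ← add_div, ← normSq_eq_norm_sq, ← normSq_eq_norm_sq]
    congr 1
    simp only [add_re, one_re, sub_re, add_im, one_im, sub_im, normSq_apply]
    ring
  have hden : ‖1 - z‖ ≤ 1 + ‖z‖ := by simpa using norm_sub_le (1 : ℂ) z
  have hsq : ‖1 - z‖ ^ 2 ≤ (1 + ‖z‖) ^ 2 := pow_le_pow_left₀ (norm_nonneg _) hden 2
  rw [hre, div_le_div_iff₀ (by linarith [norm_nonneg z]) (pow_pos (norm_pos_iff.mpr hz1) 2)]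
  nlinarith [mul_le_mul_of_nonneg_left hsq (sub_nonneg.mpr hz.le)]

end Complex

theorem re_Tfun (A : ℝ) (f : ℂ → ℂ) (z : ℂ) :
    (Tfun A f z).re = 2 / (A - 1) * ((A + 1) / 2 * ((1 + z) / (1 - z)).re - 1 -
      (z * deriv (deriv f) z / deriv f z).re) := by
  have hcoef : (2 / ((A : ℂ) - 1)) = ((2 / (A - 1) : ℝ) : ℂ) := by push_cast; ring
  have hmain : ((A : ℂ) + 1) / 2 * (1 + z) / (1 - z) =
      (((A + 1) / 2 : ℝ) : ℂ) * ((1 + z) / (1 - z)) := by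
    push_cast; ring
  rw [Tfun, hcoef, hmain, re_ofReal_mul, sub_re, sub_re, one_re, re_ofReal_mul]

theorem concavity_lower_bound_pos {A r : ℝ} (hA : -3 < A) (hr : 0 ≤ r)
    (hrA : r < 1 - 2 / √(A + 3)) :
    0 < (A + 1) / 2 * ((1 - r) / (1 + r)) - 1 - 2 * r / (1 - r ^ 2) := by
  have hs : 0 < √(A + 3) := Real.sqrt_pos.mpr (by linarith)
  have hr1 : r < 1 := hrA.trans_le (sub_le_self _ (by positivity))
  have h2 : 2 < (1 - r) * √(A + 3) := by
    rwa [lt_sub_comm, div_lt_iff₀ hs] at hrA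
  have h4 : 4 < (A + 3) * (1 - r) ^ 2 := by
    nlinarith [Real.sq_sqrt (by linarith : (0 : ℝ) ≤ A + 3)]
  have hr2 : 1 - r ^ 2 ≠ 0 := by nlinarith
  have hfactor : (A + 1) / 2 * ((1 - r) / (1 + r)) - 1 - 2 * r / (1 - r ^ 2)
      = ((A + 3) * (1 - r) ^ 2 - 4) / (2 * (1 - r ^ 2)) := by
    field_simp
    ring
  rw [hfactor]
  exact div_pos (by linarith) (by nlinarith)

theorem radius_of_concavity_Pprime_general
    (A : ℝ) (hA : A ∈ Set.Ioc (1 : ℝ) 2)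
    (f : ℂ → ℂ) (hf : AnalyticOn ℂ f (ball (0 : ℂ) 1))
    (hre : ∀ z ∈ ball (0 : ℂ) 1, 0 < (deriv f z).re)
    (z : ℂ) (hz : ‖z‖ < 1 - 2 / Real.sqrt (A + 3)) :
    0 < (Tfun A f z).re := by
  have hA1 : 1 < A := hA.1
  have hz1 : ‖z‖ < 1 := hz.trans_le (sub_le_self _ (by positivity))
  have hf' : DifferentiableOn ℂ (deriv f) (ball 0 1) := hf.differentiableOn.deriv isOpen_ball
  have hcayley := one_sub_norm_div_one_add_norm_le_re hz1
  have hlogderiv := (re_le_norm _).trans (norm_mul_deriv_div_le hf' hre hz1)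
  have hbound := concavity_lower_bound_pos (by linarith) (norm_nonneg z) hz
  rw [re_Tfun]
  refine mul_pos (div_pos two_pos (sub_pos.mpr hA1)) ?_
  nlinarith

/-- Radius of concavity of the class `P'` of analytic `f` with `Re f' > 0` on `𝔻`. -/
theorem radius_of_concavity_Pprime
    (A : ℝ) (hA : A ∈ Set.Ioc (1 : ℝ) 2)
    (f : ℂ → ℂ) (hf : AnalyticOn ℂ f (ball (0 : ℂ) 1))
    (hf0 : f 0 = 0) (hf'0 : deriv f 0 = 1)
    (hre : ∀ z ∈ ball (0 : ℂ) 1, 0 < (deriv f z).re)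
    (z : ℂ) (hz : ‖z‖ < 1 - 2 / Real.sqrt (A + 3)) :
    0 < (Tfun A f z).re :=
  radius_of_concavity_Pprime_general A hA f hf hre z hz
end

section
/- Let A ∈ (1,2] and let f₀(z) = −z + 2 log(1+z) on the open unit disc 𝔻 (principal branch of the logarithm). Then f₀(0)=0, f₀'(0)=1, Re f₀'(z) > 0 on 𝔻, and T_{f₀}(z) = ((A+3)/(A−1))·(1/(1−z²))·(z² + 2z + (A−1)/(A+3)) for all z ∈ 𝔻. Moreover, for every r with 1 − 2/√(A+3) < r < 1 one has Re T_{f₀}(−r) < 0; consequently the radius 1 − 2/√(A+3) in the radius-of-concavity result for P' is sharp. -/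
open Complex Metric Set

/-!
For `f₀ = pPrimeExtremal`, `f₀' = (1 - z)/(1 + z)` is the Cayley transform of the disc onto the right half-plane, so
`f₀ ∈ P'`, and `f₀'' = -2/(1 + z)²`. Substituting into `T_{f₀}` gives the rational expression,
whose sign at `z = -r` is that of `r² - 2r + (A - 1)/(A + 3)`, a quadratic with roots
`1 ± 2/√(A + 3)`.
-/

noncomputable def pPrimeExtremal (z : ℂ) : ℂ := -z + 2 * log (1 + z)

lemma hasDerivAt_pPrimeExtremal {z : ℂ} (hz : 1 + z ∈ slitPlane) :
    HasDerivAt pPrimeExtremal ((1 - z) / (1 + z)) z := by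
  have hlog : HasDerivAt (fun w : ℂ => log (1 + w)) (1 / (1 + z)) z :=
    ((hasDerivAt_id z).const_add 1).clog hz
  refine ((hasDerivAt_id' z).neg.add (hlog.const_mul 2)).congr_deriv ?_
  field_simp [slitPlane_ne_zero hz]
  ring

lemma deriv_pPrimeExtremal_eventuallyEq {z : ℂ} (hz : 1 + z ∈ slitPlane) :
    deriv pPrimeExtremal =ᶠ[nhds z] fun w => (1 - w) / (1 + w) := by
  have hopen : IsOpen {w : ℂ | 1 + w ∈ slitPlane} :=
    isOpen_slitPlane.preimage (continuous_const.add continuous_id)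
  filter_upwards [hopen.mem_nhds hz] with w hw using (hasDerivAt_pPrimeExtremal hw).deriv

lemma deriv_deriv_pPrimeExtremal {z : ℂ} (hz : 1 + z ∈ slitPlane) :
    deriv (deriv pPrimeExtremal) z = -2 / (1 + z) ^ 2 := by
  have hne : 1 + z ≠ 0 := slitPlane_ne_zero hz
  rw [(deriv_pPrimeExtremal_eventuallyEq hz).deriv_eq]
  have h : HasDerivAt (fun w : ℂ => (1 - w) / (1 + w))
      ((-1 * (1 + z) - (1 - z) * 1) / (1 + z) ^ 2) z :=
    ((hasDerivAt_id z).const_sub 1).div ((hasDerivAt_id z).const_add 1) hne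
  rw [h.deriv]
  ring

lemma re_one_sub_div_one_add_pos {z : ℂ} (hz : ‖z‖ < 1) : 0 < ((1 - z) / (1 + z)).re := by
  have hne : 1 + z ≠ 0 := slitPlane_ne_zero (mem_slitPlane_of_norm_lt_one hz)
  have hnormSq : normSq z < 1 := by
    rw [normSq_eq_norm_sq]; nlinarith [norm_nonneg z]
  -- `Re ((1 - z)(1 + conj z)) = 1 - |z|²`
  rw [div_re, ← add_div]
  refine div_pos ?_ (normSq_pos.mpr hne)
  simp only [normSq_apply, sub_re, sub_im, add_re, add_im, one_re, one_im] at hnormSq ⊢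
  nlinarith

lemma Tfun_eq_of_deriv_eq {A : ℝ} (hA1 : A ≠ 1) (hA3 : A ≠ -3) {f : ℂ → ℂ} {z : ℂ}
    (h1sub : 1 - z ≠ 0) (h1add : 1 + z ≠ 0)
    (hf' : deriv f z = (1 - z) / (1 + z)) (hf'' : deriv (deriv f) z = -2 / (1 + z) ^ 2) :
    Tfun A f z = (((A : ℂ) + 3) / ((A : ℂ) - 1)) * (1 / (1 - z ^ 2)) *
      (z ^ 2 + 2 * z + ((A : ℂ) - 1) / ((A : ℂ) + 3)) := by
  have hA1' : (A : ℂ) - 1 ≠ 0 := sub_ne_zero.mpr (by exact_mod_cast hA1)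
  have hA3' : (A : ℂ) + 3 ≠ 0 := by
    rw [← sub_neg_eq_add]; exact sub_ne_zero.mpr (by exact_mod_cast hA3)
  have hsq : 1 - z ^ 2 ≠ 0 := by
    rw [show 1 - z ^ 2 = (1 - z) * (1 + z) by ring]; exact mul_ne_zero h1sub h1add
  rw [Tfun, hf', hf'']
  field_simp
  ring

lemma Tfun_pPrimeExtremal {A : ℝ} (hA1 : A ≠ 1) (hA3 : A ≠ -3) {z : ℂ} (hz : ‖z‖ < 1) :
    Tfun A pPrimeExtremal z = (((A : ℂ) + 3) / ((A : ℂ) - 1)) * (1 / (1 - z ^ 2)) *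
      (z ^ 2 + 2 * z + ((A : ℂ) - 1) / ((A : ℂ) + 3)) :=
  have hslit := mem_slitPlane_of_norm_lt_one hz
  Tfun_eq_of_deriv_eq hA1 hA3 (sub_ne_zero.mpr fun h => by simp [← h] at hz)
    (slitPlane_ne_zero hslit) (hasDerivAt_pPrimeExtremal hslit).deriv
    (deriv_deriv_pPrimeExtremal hslit)

lemma re_Tfun_pPrimeExtremal_neg_ofReal {A : ℝ} (hA1 : A ≠ 1) (hA3 : A ≠ -3) {r : ℝ}
    (hr : |r| < 1) : (Tfun A pPrimeExtremal (-(r : ℂ))).re =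
      (A + 3) / (A - 1) * (1 / (1 - r ^ 2)) * (r ^ 2 - 2 * r + (A - 1) / (A + 3)) := by
  rw [Tfun_pPrimeExtremal hA1 hA3 (by simpa using hr)]
  norm_cast
  ring_nf

lemma sq_sub_two_mul_add_neg_of_radius_lt {A r : ℝ} (hA : 0 < A + 3)
    (hr : 1 - 2 / Real.sqrt (A + 3) < r) (hr1 : r < 1) :
    r ^ 2 - 2 * r + (A - 1) / (A + 3) < 0 := by
  have hc : 0 < Real.sqrt (A + 3) := Real.sqrt_pos.mpr hA
  have hlin : Real.sqrt (A + 3) * (1 - r) < 2 := by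
    rw [← lt_div_iff₀' hc]; linarith
  have hsq : (A + 3) * (1 - r) ^ 2 < 4 := by
    have := pow_lt_pow_left₀ hlin (mul_nonneg hc.le (by linarith)) two_ne_zero
    rwa [mul_pow, Real.sq_sqrt hA.le, show (2 : ℝ) ^ 2 = 4 by norm_num] at this
  have key : r ^ 2 - 2 * r + (A - 1) / (A + 3) = ((A + 3) * (1 - r) ^ 2 - 4) / (A + 3) := by
    field_simp; ring
  rw [key]
  exact div_neg_of_neg_of_pos (by linarith) hA

/-- Sharpness of the radius of concavity `1 - 2/√(A+3)` of `P'`, exhibited by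
`f₀(z) = -z + 2 log(1+z)`. -/
theorem radius_of_concavity_Pprime_sharp
    (A : ℝ) (hA : A ∈ Set.Ioc (1 : ℝ) 2)
    (f₀ : ℂ → ℂ) (hf₀ : ∀ z, f₀ z = -z + 2 * Complex.log (1 + z)) :
    f₀ 0 = 0 ∧ deriv f₀ 0 = 1 ∧
    (∀ z ∈ ball (0 : ℂ) 1, 0 < (deriv f₀ z).re) ∧
    (∀ z ∈ ball (0 : ℂ) 1,
      Tfun A f₀ z = (((A : ℂ) + 3) / ((A : ℂ) - 1)) * (1 / (1 - z ^ 2)) *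
        (z ^ 2 + 2 * z + ((A : ℂ) - 1) / ((A : ℂ) + 3))) ∧
    (∀ r : ℝ, 1 - 2 / Real.sqrt (A + 3) < r → r < 1 →
      (Tfun A f₀ (-(r : ℂ))).re < 0) := by
  obtain rfl : f₀ = pPrimeExtremal := funext hf₀
  obtain ⟨hA1, -⟩ := hA
  have hA_ne_one : A ≠ 1 := hA1.ne'
  have hA_ne_neg_three : A ≠ -3 := by linarith
  have hderiv {z : ℂ} (hz : z ∈ ball (0 : ℂ) 1) : deriv pPrimeExtremal z = (1 - z) / (1 + z) :=
    (hasDerivAt_pPrimeExtremal (mem_slitPlane_of_norm_lt_one (mem_ball_zero_iff.mp hz))).deriv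
  refine ⟨by simp [pPrimeExtremal], by simpa using hderiv (mem_ball_self one_pos),
    fun z hz => hderiv hz ▸ re_one_sub_div_one_add_pos (mem_ball_zero_iff.mp hz),
    fun z hz => Tfun_pPrimeExtremal hA_ne_one hA_ne_neg_three (mem_ball_zero_iff.mp hz), fun r hr hr1 => ?_⟩
  have hr0 : 0 < r := by
    have hc : 2 < Real.sqrt (A + 3) := by rw [Real.lt_sqrt zero_le_two]; linarith
    linarith [(div_lt_one (by linarith)).mpr hc]
  have hr_abs : |r| < 1 := by rwa [abs_of_pos hr0]
  rw [re_Tfun_pPrimeExtremal_neg_ofReal hA_ne_one hA_ne_neg_three hr_abs]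
  have hfactor : 0 < (A + 3) / (A - 1) * (1 / (1 - r ^ 2)) :=
    mul_pos (div_pos (by linarith) (by linarith))
      (one_div_pos.mpr (sub_pos.mpr ((sq_lt_one_iff_abs_lt_one r).mpr hr_abs)))
  exact mul_neg_of_pos_of_neg hfactor (sq_sub_two_mul_add_neg_of_radius_lt (by linarith) hr hr1)
end
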